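/- Fix integers n ≥ 1, m ≥ 1, a finite set 𝒴, N = {1, …, n}, and for every full assignment c : N → {1, …, m} a probability vector p(·|c) : 𝒴 → ℝ (nonnegative and summing to 1). With E_A[H] the expected conditional entropy at coalition A under bottom-up marginalization, the estimated Shapley value of each span is non-negative: for every k ∈ N, Σ_{A ⊆ N∖{k}} (|A|!·(n − |A| − 1)!/n!) · (E_A[H] − E_{A∪{k}}[H]) ≥ 0. -/
import Mathlib


/-- The bottom-up marginalized vector `p(·|c_A) = m^{−(n−|A|)} · Σ_{c extends c_A} p(·|c)`,
the sum running over all full assignments `c : N → {1, …, m}` agreeing with `c_A` on `A`. -/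
noncomputable def margin {n m : ℕ} {𝒴 : Type} [Fintype 𝒴]
    (p : (Fin n → Fin m) → 𝒴 → ℝ) (A : Finset (Fin n))
    (cA : {j // j ∈ A} → Fin m) (y : 𝒴) : ℝ :=
  (1 / (m : ℝ) ^ (n - A.card)) *
    ∑ c ∈ Finset.univ.filter (fun c : Fin n → Fin m => ∀ j : {j // j ∈ A}, c j.1 = cA j),
      p c y

/-- The entropy `H(q) = Σ_{y∈𝒴} negMulLog (q y)` of a vector `q : 𝒴 → ℝ`. -/
noncomputable def entropyVec {𝒴 : Type} [Fintype 𝒴] (q : 𝒴 → ℝ) : ℝ :=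
  ∑ y, Real.negMulLog (q y)

/-- The partial assignment on `A ∪ {k}` extending `c_A` by the value `v` at `k`. -/
def extendAssign {n m : ℕ} {A : Finset (Fin n)} (cA : {j // j ∈ A} → Fin m)
    (k : Fin n) (v : Fin m) : {j // j ∈ insert k A} → Fin m :=
  fun j => if h : j.1 ∈ A then cA ⟨j.1, h⟩ else v

/-- The expected conditional entropy at coalition `A`:
`E_A[H] = m^{−|A|} · Σ_{c_A : A → {1,…,m}} H(p(·|c_A))`. -/
noncomputable def expCondEntropy {n m : ℕ} {𝒴 : Type} [Fintype 𝒴]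
    (p : (Fin n → Fin m) → 𝒴 → ℝ) (A : Finset (Fin n)) : ℝ :=
  (1 / (m : ℝ) ^ A.card) *
    ∑ cA : {j // j ∈ A} → Fin m, entropyVec (margin p A cA)

open Finset Real

lemma margin_nonneg {n m : ℕ} {𝒴 : Type} [Fintype 𝒴]
    (p : (Fin n → Fin m) → 𝒴 → ℝ) (hp0 : ∀ c y, 0 ≤ p c y)
    (A : Finset (Fin n)) (cA : {j // j ∈ A} → Fin m) (y : 𝒴) :
    0 ≤ margin p A cA y :=
  mul_nonneg (by positivity) (Finset.sum_nonneg fun c _ => hp0 c y)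

/-- restriction/extension equivalence -/
def extEquiv {n m : ℕ} (A : Finset (Fin n)) (k : Fin n) (hk : k ∉ A) :
    (({j // j ∈ A} → Fin m) × Fin m) ≃ ({j // j ∈ insert k A} → Fin m) where
  toFun x := extendAssign x.1 k x.2
  invFun cB := (fun j => cB ⟨j.1, Finset.mem_insert_of_mem j.2⟩,
    cB ⟨k, Finset.mem_insert_self k A⟩)
  left_inv := by
    rintro ⟨cA, v⟩
    ext j
    · simp [extendAssign, j.2]
    · simp [extendAssign, hk]
  right_inv := by
    intro cB
    funext j
    unfold extendAssign
    by_cases h : j.1 ∈ A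
    · simp only [dif_pos h]
    · have : j.1 = k := by
        rcases Finset.mem_insert.1 j.2 with h' | h'
        · exact h'
        · exact absurd h' h
      simp only [dif_neg h]
      congr 1
      exact Subtype.ext this.symm

lemma margin_avg {n m : ℕ} {𝒴 : Type} [Fintype 𝒴] (hm : 1 ≤ m)
    (p : (Fin n → Fin m) → 𝒴 → ℝ) (A : Finset (Fin n)) (k : Fin n)
    (hk : k ∉ A) (hcard : A.card < n) (cA : {j // j ∈ A} → Fin m) (y : 𝒴) :
    margin p A cA y
      = ∑ v : Fin m, (1 / (m : ℝ)) * margin p (insert k A) (extendAssign cA k v) y := by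
  have hm0 : (m : ℝ) ≠ 0 := by positivity
  have hfilter : ∀ v : Fin m,
      (Finset.univ.filter (fun c : Fin n → Fin m =>
        ∀ j : {j // j ∈ insert k A}, c j.1 = extendAssign cA k v j))
      = (Finset.univ.filter (fun c : Fin n → Fin m =>
          ∀ j : {j // j ∈ A}, c j.1 = cA j)).filter (fun c => c k = v) := by
    intro v
    ext c
    simp only [Finset.mem_filter, Finset.mem_univ, true_and, extendAssign, Subtype.forall]
    constructor
    · intro h
      refine ⟨fun j hj => ?_, ?_⟩
      · have := h j (Finset.mem_insert_of_mem hj); rwa [dif_pos hj] at this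
      · have := h k (Finset.mem_insert_self k A); rwa [dif_neg hk] at this
    · rintro ⟨h1, h2⟩ j hj
      by_cases hjA : j ∈ A
      · rw [dif_pos hjA]; exact h1 j hjA
      · rw [dif_neg hjA]
        have hjk : j = k := (Finset.mem_insert.1 hj).resolve_right hjA
        rw [hjk]; exact h2
  simp only [margin, hfilter, Finset.card_insert_of_notMem hk]
  have he : n - A.card = (n - (A.card + 1)) + 1 := by omega
  rw [← Finset.sum_fiberwise
      ((Finset.univ.filter (fun c : Fin n → Fin m =>
        ∀ j : {j // j ∈ A}, c j.1 = cA j))) (fun c => c k) (fun c => p c y)]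
  rw [Finset.mul_sum]
  refine Finset.sum_congr rfl fun v _ => ?_
  rw [he, pow_succ]
  ring

lemma entropy_step {n m : ℕ} {𝒴 : Type} [Fintype 𝒴] (hm : 1 ≤ m)
    (p : (Fin n → Fin m) → 𝒴 → ℝ) (hp0 : ∀ c y, 0 ≤ p c y)
    (A : Finset (Fin n)) (k : Fin n) (hk : k ∉ A) (hcard : A.card < n)
    (cA : {j // j ∈ A} → Fin m) :
    (1 / (m : ℝ)) * ∑ v : Fin m, entropyVec (margin p (insert k A) (extendAssign cA k v))
      ≤ entropyVec (margin p A cA) := by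
  have hm0 : (m : ℝ) ≠ 0 := by positivity
  rw [Finset.mul_sum]
  calc ∑ v : Fin m, (1 / (m : ℝ)) * entropyVec (margin p (insert k A) (extendAssign cA k v))
      = ∑ y, ∑ v : Fin m,
          (1 / (m : ℝ)) * Real.negMulLog (margin p (insert k A) (extendAssign cA k v) y) := by
        rw [Finset.sum_comm]
        exact Finset.sum_congr rfl fun v _ => by rw [entropyVec, Finset.mul_sum]
    _ ≤ ∑ y, Real.negMulLog (margin p A cA y) := by
        refine Finset.sum_le_sum fun y _ => ?_
        rw [margin_avg hm p A k hk hcard cA y]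
        have hjen := Real.concaveOn_negMulLog.le_map_sum
          (t := (Finset.univ : Finset (Fin m)))
          (w := fun _ => 1 / (m : ℝ))
          (p := fun v => margin p (insert k A) (extendAssign cA k v) y)
          (fun _ _ => by positivity)
          (by
            rw [Finset.sum_const, Finset.card_univ, Fintype.card_fin, nsmul_eq_mul]
            field_simp)
          (fun v _ => margin_nonneg p hp0 _ _ y)
        simpa [smul_eq_mul] using hjen
    _ = entropyVec (margin p A cA) := rfl

/-- If every bottom-level vector `p(·|c)` is a probability vector, the
estimated Shapley value of each span is non-negative: for every `k ∈ N`,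
`Σ_{A ⊆ N∖{k}} (|A|!·(n − |A| − 1)!/n!) · (E_A[H] − E_{A∪{k}}[H]) ≥ 0`. -/
theorem stmt11 (n m : ℕ) (hn : 1 ≤ n) (hm : 1 ≤ m)
    {𝒴 : Type} [Fintype 𝒴] (p : (Fin n → Fin m) → 𝒴 → ℝ)
    (hp0 : ∀ c y, 0 ≤ p c y) (hp1 : ∀ c, ∑ y, p c y = 1)
    (k : Fin n) :
    0 ≤ ∑ A ∈ (Finset.univ.erase k).powerset,
      ((A.card.factorial * (n - A.card - 1).factorial : ℝ) / n.factorial) *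
        (expCondEntropy p A - expCondEntropy p (insert k A)) := by
  refine Finset.sum_nonneg fun A hA => ?_
  have hA' := Finset.mem_powerset.1 hA
  have hk : k ∉ A := fun h => (Finset.mem_erase.1 (hA' h)).1 rfl
  have hcard : A.card < n := by
    have h1 : A.card ≤ (Finset.univ.erase k).card := Finset.card_le_card hA'
    have h2 : (Finset.univ.erase k).card = n - 1 := by
      rw [Finset.card_erase_of_mem (Finset.mem_univ k), Finset.card_univ, Fintype.card_fin]
    omega
  have hm0 : (m : ℝ) ≠ 0 := by positivity
  refine mul_nonneg (by positivity) (sub_nonneg.2 ?_)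
  -- E_{A∪{k}} ≤ E_A
  have hsum : ∑ cB : {j // j ∈ insert k A} → Fin m, entropyVec (margin p (insert k A) cB)
      = ∑ cA : {j // j ∈ A} → Fin m, ∑ v : Fin m,
          entropyVec (margin p (insert k A) (extendAssign cA k v)) := by
    rw [← Equiv.sum_comp (extEquiv A k hk)
      (fun cB => entropyVec (margin p (insert k A) cB)), Fintype.sum_prod_type]
    rfl
  have hbound : ∀ cA : {j // j ∈ A} → Fin m,
      ∑ v : Fin m, entropyVec (margin p (insert k A) (extendAssign cA k v))
        ≤ (m : ℝ) * entropyVec (margin p A cA) := by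
    intro cA
    have h := entropy_step hm p hp0 A k hk hcard cA
    have h' := mul_le_mul_of_nonneg_left h (le_of_lt (by positivity : (0:ℝ) < m))
    calc ∑ v : Fin m, entropyVec (margin p (insert k A) (extendAssign cA k v))
        = (m : ℝ) * ((1 / (m : ℝ)) *
            ∑ v : Fin m, entropyVec (margin p (insert k A) (extendAssign cA k v))) := by
          field_simp
      _ ≤ (m : ℝ) * entropyVec (margin p A cA) := h'
  calc expCondEntropy p (insert k A)
      = (1 / (m : ℝ) ^ (A.card + 1)) *
          ∑ cA : {j // j ∈ A} → Fin m, ∑ v : Fin m,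
            entropyVec (margin p (insert k A) (extendAssign cA k v)) := by
        rw [expCondEntropy, Finset.card_insert_of_notMem hk, hsum]
    _ ≤ (1 / (m : ℝ) ^ (A.card + 1)) *
          ∑ cA : {j // j ∈ A} → Fin m, (m : ℝ) * entropyVec (margin p A cA) := by
        refine mul_le_mul_of_nonneg_left ?_ (by positivity)
        exact Finset.sum_le_sum fun cA _ => hbound cA
    _ = expCondEntropy p A := by
        rw [expCondEntropy, ← Finset.mul_sum, pow_succ]
        field_simp
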